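/- Consider the stochastic coupling argument of the threshold theorem: let T₁, T₂, ... be the (coupled) outcomes of successive transmission attempts (i.i.d. Bernoulli per link). If Packet 2 starts its transmission attempts at node i with time-to-deadline σ and Packet 1 starts at the same node with time-to-deadline σ − k (k ≥ 1), and both experience the identical sequence of subsequent successes/failures, then whenever Packet 1 reaches the destination within its deadline, Packet 2 also reaches the destination within its deadline. Hence the expected reward of transmitting immediately is at least that of waiting k slots. -/

import Mathlib

open MeasureTheory

theorem integral_indicator_const_sub_mono {Ω : Type*} [MeasurableSpace Ω] {μ : Measure Ω}
    [IsFiniteMeasure μ] {s t : Set Ω} (hs : MeasurableSet s) (ht : MeasurableSet t)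
    (hst : s ⊆ t) {β : ℝ} (hβ : 0 ≤ β) {c : Ω → ℝ} (hc : Integrable c μ) :
    ∫ ω, (s.indicator (fun _ => β) ω - c ω) ∂μ ≤ ∫ ω, (t.indicator (fun _ => β) ω - c ω) ∂μ :=
  integral_mono (((integrable_const β).indicator hs).sub hc)
    (((integrable_const β).indicator ht).sub hc)
    fun ω => sub_le_sub_right (Set.indicator_le_indicator_of_subset hst (fun _ => hβ) ω) _

theorem coupling_immediate_transmission_dominates_general
    {Ω : Type*} [MeasurableSpace Ω] (μ : Measure Ω) [IsProbabilityMeasure μ]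
    (T : Ω → ℕ) (hT : Measurable T)
    (σ k : ℕ)
    (β : ℝ) (hβ : 0 ≤ β)
    (c : Ω → ℝ) (hc : Integrable c μ) :
    (∀ ω, T ω ≤ σ - k → T ω ≤ σ) ∧
    (∫ ω, (Set.indicator {ω | T ω ≤ σ - k} (fun _ => β) ω - c ω) ∂μ)
      ≤ ∫ ω, (Set.indicator {ω | T ω ≤ σ} (fun _ => β) ω - c ω) ∂μ := by
  have delivered_of_delivered_late : ∀ ω, T ω ≤ σ - k → T ω ≤ σ :=
    fun _ h => h.trans (Nat.sub_le σ k)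
  exact ⟨delivered_of_delivered_late,
    integral_indicator_const_sub_mono (hT measurableSet_Iic) (hT measurableSet_Iic)
      delivered_of_delivered_late hβ hc⟩

/-- Coupling argument of the threshold theorem.  Let T ω be the
(coupled) number of slots a packet needs to reach the destination, determined
by the common sequence of transmission outcomes.  Packet 1 starts with
time-to-deadline σ − k (k ≥ 1, having waited k slots) and Packet 2 with
time-to-deadline σ.  Then whenever Packet 1 is delivered in time
(T ω ≤ σ − k), so is Packet 2 (T ω ≤ σ); and since the energy costs c paid
are identical under the coupling, the expected reward of transmitting
immediately is at least that of waiting k slots: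
E[β·1{T ≤ σ−k} − c] ≤ E[β·1{T ≤ σ} − c]. -/
theorem coupling_immediate_transmission_dominates
    {Ω : Type*} [MeasurableSpace Ω] (μ : Measure Ω) [IsProbabilityMeasure μ]
    (T : Ω → ℕ) (hT : Measurable T)
    (σ k : ℕ) (hk : 1 ≤ k) (hkσ : k ≤ σ)
    (β : ℝ) (hβ : 0 ≤ β)
    (c : Ω → ℝ) (hc : Integrable c μ) :
    (∀ ω, T ω ≤ σ - k → T ω ≤ σ) ∧
    (∫ ω, (Set.indicator {ω | T ω ≤ σ - k} (fun _ => β) ω - c ω) ∂μ)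
      ≤ ∫ ω, (Set.indicator {ω | T ω ≤ σ} (fun _ => β) ω - c ω) ∂μ :=
  coupling_immediate_transmission_dominates_general μ T hT σ k β hβ c hc
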